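/- Let W be a symmetric positive semidefinite p x p real matrix, Gamma* a p x p real matrix, lambda_bar > 0, nu0 > 0 and eta0 > 1; let S_j = supp(Gamma*_{.j}) for each j. Assume: (a) the compatibility condition holds for each S_j, i.e., for every b in R^p with sum_{l not in S_j} |b_l| <= eta0 * sum_{l in S_j} |b_l| one has nu0^2 * (sum_{l in S_j} |b_l|)^2 <= |S_j| * (b^T W b); (b) ||W Gamma* - I_p||_max <= lambda_bar; and (c) A0_bar >= (eta0 + 1)/(eta0 - 1). If Gamma_hat minimizes the objective Obj(G) = (1/2) Tr(G^T W G) - Tr(G) + A0_bar * lambda_bar * ||G||_{L1} over all p x p matrices G, then for every j = 1,...,p: ||Gamma_hat_{.j} - Gamma*_{.j}||_1 <= (8 * A0_bar^2 * nu0^{-2} / (A0_bar - 1)) * |S_j| * lambda_bar. -/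

import Mathlib

open MeasureTheory ProbabilityTheory Real Finset
open scoped Classical ENNReal

noncomputable section

/-- Number of nonzero entries of a vector (the "ℓ0 norm"). -/
def nnz {ι : Type*} (v : ι → ℝ) : ℕ := (Function.support v).ncard

/-- ℓ¹ norm of a finitely supported vector. -/
def l1 {ι : Type*} [Fintype ι] (v : ι → ℝ) : ℝ := ∑ i, |v i|

/-- ℓ² norm. -/
def l2 {ι : Type*} [Fintype ι] (v : ι → ℝ) : ℝ := Real.sqrt (∑ i, (v i) ^ 2)

/-- ℓ∞ norm. -/
def linf {ι : Type*} [Fintype ι] (v : ι → ℝ) : ℝ := ⨆ i, |v i|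

/-- Euclidean inner product. -/
def dot {ι : Type*} [Fintype ι] (u v : ι → ℝ) : ℝ := ∑ i, u i * v i

/-- Entrywise max norm of a matrix. -/
def matMax {ι κ : Type*} [Fintype ι] [Fintype κ] (A : Matrix ι κ ℝ) : ℝ :=
  ⨆ i, ⨆ j, |A i j|

/-- Matrix ℓ¹ operator norm: maximum column absolute sum. -/
def matL1 {ι κ : Type*} [Fintype ι] [Fintype κ] (A : Matrix ι κ ℝ) : ℝ :=
  ⨆ j, ∑ i, |A i j|

/-- Matrix ℓ² operator (spectral) norm. -/
def matL2 {ι κ : Type*} [Fintype ι] [Fintype κ] (A : Matrix ι κ ℝ) : ℝ :=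
  sInf {c | 0 ≤ c ∧ ∀ v : κ → ℝ, l2 (A.mulVec v) ≤ c * l2 v}

/-- Entrywise ℓ¹ norm of a matrix. -/
def matE1 {ι κ : Type*} [Fintype ι] [Fintype κ] (A : Matrix ι κ ℝ) : ℝ :=
  ∑ i, ∑ j, |A i j|

/-- Principal submatrix with rows and columns indexed by `S`. -/
def subSq {p : ℕ} (A : Matrix (Fin p) (Fin p) ℝ) (S : Set (Fin p)) : Matrix S S ℝ :=
  A.submatrix (fun i => (i : Fin p)) (fun j => (j : Fin p))

/-- Sub-gaussian real random variable with (sub-gaussian) norm at most `σ`: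
`E[exp(z²/σ²)] ≤ 2`. -/
def SubG {Ω : Type*} [MeasurableSpace Ω] (μ : Measure Ω) (z : Ω → ℝ) (σ : ℝ) : Prop :=
  ∫ ω, Real.exp ((z ω) ^ 2 / σ ^ 2) ∂μ ≤ 2

/-- Sub-gaussian random vector with norm at most `σ`. -/
def SubGVec {Ω : Type*} [MeasurableSpace Ω] {ι : Type*} [Fintype ι]
    (μ : Measure Ω) (Z : Ω → ι → ℝ) (σ : ℝ) : Prop :=
  ∀ u : ι → ℝ, SubG μ (fun ω => dot u (Z ω)) (σ * l2 u)


/-- The product `σ`-algebra on matrices. -/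
instance matrixMeasurableSpace {m n α : Type*} [MeasurableSpace α] :
    MeasurableSpace (Matrix m n α) :=
  (inferInstance : MeasurableSpace (m → n → α))

/-!
Fix a column `j` and write `Δ` for the error of the `j`-th column. The objective separates over
columns, so column `j` of `Γhat` beats `Γ*_{·j}` for the lasso objective
`½ vᵀWv - v_j + Ā₀λ̄‖v‖₁`. Expanding around `Γ*_{·j}` and using `|(WΓ* - I)_{ij}| ≤ λ̄` gives the
basic inequality `½ ΔᵀWΔ ≤ (Ā₀+1)λ̄‖Δ_S‖₁ - (Ā₀-1)λ̄‖Δ_{Sᶜ}‖₁`. Positivity of `W` puts `Δ` in the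
cone `‖Δ_{Sᶜ}‖₁ ≤ η₀‖Δ_S‖₁`, where the compatibility condition gives
`ν₀²‖Δ_S‖₁² ≤ |S| ΔᵀWΔ ≤ 4Ā₀λ̄|S|‖Δ_S‖₁`; the cone bound then converts this into a bound on `‖Δ‖₁`.
-/

open Matrix

section Lasso

variable {ι : Type*} [Fintype ι]

lemma nnz_eq_card_filter_ne_zero (v : ι → ℝ) : nnz v = #{i | v i ≠ 0} := by
  rw [nnz, ← Set.ncard_coe_finset]
  congr 1
  ext i
  simp

lemma l1_eq_sum_add_sum_compl [DecidableEq ι] (v : ι → ℝ) (S : Finset ι) :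
    l1 v = ∑ i ∈ S, |v i| + ∑ i ∈ Sᶜ, |v i| :=
  (sum_add_sum_compl S _).symm

lemma abs_dotProduct_le_l1_mul {u r : ι → ℝ} {c : ℝ} (hr : ∀ i, |r i| ≤ c) :
    |u ⬝ᵥ r| ≤ l1 u * c :=
  calc |u ⬝ᵥ r| ≤ ∑ i, |u i * r i| := abs_sum_le_sum_abs _ _
    _ ≤ ∑ i, |u i| * c := sum_le_sum fun i _ => by
        rw [abs_mul]; exact mul_le_mul_of_nonneg_left (hr i) (abs_nonneg _)
    _ = l1 u * c := by rw [l1, sum_mul]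

lemma l1_sub_l1_add_le [DecidableEq ι] {β : ι → ℝ} {S : Finset ι} (hβ : ∀ i ∉ S, β i = 0)
    (Δ : ι → ℝ) : l1 β - l1 (β + Δ) ≤ ∑ i ∈ S, |Δ i| - ∑ i ∈ Sᶜ, |Δ i| := by
  have hS : ∑ i ∈ S, |β i| - ∑ i ∈ S, |β i + Δ i| ≤ ∑ i ∈ S, |Δ i| := by
    rw [← sum_sub_distrib]
    refine sum_le_sum fun i _ => ?_
    have := abs_add_le (β i + Δ i) (-Δ i)
    rw [add_neg_cancel_right, abs_neg] at this
    linarith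
  have hSc : ∑ i ∈ Sᶜ, |β i| = 0 := sum_eq_zero fun i hi => by
    rw [hβ i (mem_compl.mp hi), abs_zero]
  have hSc' : ∑ i ∈ Sᶜ, |(β + Δ) i| = ∑ i ∈ Sᶜ, |Δ i| := sum_congr rfl fun i hi => by
    rw [Pi.add_apply, hβ i (mem_compl.mp hi), zero_add]
  rw [l1_eq_sum_add_sum_compl β S, l1_eq_sum_add_sum_compl (β + Δ) S, hSc, hSc']
  simp only [Pi.add_apply]
  linarith

lemma dotProduct_mulVec_comm_of_isSymm {W : Matrix ι ι ℝ} (hW : W.IsSymm) (u v : ι → ℝ) :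
    u ⬝ᵥ W *ᵥ v = v ⬝ᵥ W *ᵥ u := by
  rw [dotProduct_mulVec, ← mulVec_transpose, hW.eq, dotProduct_comm]

def lassoObjective (W : Matrix ι ι ℝ) (e : ι → ℝ) (c : ℝ) (v : ι → ℝ) : ℝ :=
  1 / 2 * (v ⬝ᵥ W *ᵥ v) - e ⬝ᵥ v + c * l1 v

lemma lassoObjective_add_sub {W : Matrix ι ι ℝ} (hW : W.IsSymm) (e : ι → ℝ) (c : ℝ)
    (β Δ : ι → ℝ) :
    lassoObjective W e c (β + Δ) - lassoObjective W e c β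
      = 1 / 2 * (Δ ⬝ᵥ W *ᵥ Δ) + Δ ⬝ᵥ (W *ᵥ β - e) + c * (l1 (β + Δ) - l1 β) := by
  have hcross := dotProduct_mulVec_comm_of_isSymm hW β Δ
  simp only [lassoObjective, mulVec_add, dotProduct_add, add_dotProduct, dotProduct_sub,
    dotProduct_comm e Δ]
  linear_combination (1 / 2 : ℝ) * hcross

lemma half_quadForm_le_of_lassoObjective_le [DecidableEq ι] {W : Matrix ι ι ℝ} (hW : W.IsSymm)
    {e β Δ : ι → ℝ} {S : Finset ι} (hβ : ∀ i ∉ S, β i = 0) {lam A : ℝ} (hlam : 0 ≤ lam)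
    (hA : 0 ≤ A) (hres : ∀ i, |(W *ᵥ β - e) i| ≤ lam)
    (hopt : lassoObjective W e (A * lam) (β + Δ) ≤ lassoObjective W e (A * lam) β) :
    1 / 2 * (Δ ⬝ᵥ W *ᵥ Δ)
      ≤ (A + 1) * lam * ∑ i ∈ S, |Δ i| - (A - 1) * lam * ∑ i ∈ Sᶜ, |Δ i| := by
  have hexpand := lassoObjective_add_sub hW e (A * lam) β Δ
  have hlin := neg_le_of_abs_le (abs_dotProduct_le_l1_mul (u := Δ) hres)
  have hpen := mul_le_mul_of_nonneg_left (l1_sub_l1_add_le hβ Δ) (mul_nonneg hA hlam)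
  rw [l1_eq_sum_add_sum_compl Δ S] at hlin
  linarith

/-- The scalar core of the argument: `a` and `b` stand for `‖Δ_S‖₁` and `‖Δ_{Sᶜ}‖₁`,
`q` for `ΔᵀWΔ` and `s` for `|S|`. -/
lemma add_le_of_half_le_of_compat {A η lam ν s a b q : ℝ} (hA : 1 < A)
    (hAη : A + 1 ≤ η * (A - 1)) (hlam : 0 < lam) (hν : 0 < ν) (hs : 0 ≤ s) (ha : 0 ≤ a)
    (hb : 0 ≤ b) (hq : 0 ≤ q) (hbasic : 1 / 2 * q ≤ (A + 1) * lam * a - (A - 1) * lam * b)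
    (hcomp : b ≤ η * a → ν ^ 2 * a ^ 2 ≤ s * q) :
    a + b ≤ 8 * A ^ 2 * ν⁻¹ ^ 2 / (A - 1) * s * lam := by
  have hA1 : 0 < A - 1 := by linarith
  have hcone : (A - 1) * b ≤ (A + 1) * a :=
    le_of_mul_le_mul_right (by linarith) hlam
  have hq_le : q ≤ 4 * A * lam * a := by
    have hAlam : 0 ≤ (A - 1) * lam := mul_nonneg hA1.le hlam.le
    nlinarith [mul_nonneg hAlam hb, mul_nonneg hAlam ha]
  have ha_le : ν ^ 2 * a ≤ 4 * A * lam * s := by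
    rcases ha.eq_or_lt with rfl | ha
    · simp only [mul_zero]; positivity
    · have hb_le : b ≤ η * a := le_of_mul_le_mul_left (by nlinarith) hA1
      have := (hcomp hb_le).trans (mul_le_mul_of_nonneg_left hq_le hs)
      nlinarith
  have hν2 : 0 < ν ^ 2 := by positivity
  calc a + b ≤ 2 * A * a / (A - 1) := by rw [le_div_iff₀ hA1]; linarith
    _ ≤ 2 * A * (4 * A * lam * s / ν ^ 2) / (A - 1) := by
        gcongr
        rw [le_div_iff₀ hν2]
        linarith
    _ = 8 * A ^ 2 * ν⁻¹ ^ 2 / (A - 1) * s * lam := by field_simp; ring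

theorem l1_le_of_lassoObjective_le [DecidableEq ι] {W : Matrix ι ι ℝ} (hW : W.PosSemidef)
    {e β Δ : ι → ℝ} {S : Finset ι} (hβ : ∀ i ∉ S, β i = 0) {lam ν η A : ℝ} (hlam : 0 < lam)
    (hν : 0 < ν) (hA : 1 < A) (hAη : A + 1 ≤ η * (A - 1))
    (hres : ∀ i, |(W *ᵥ β - e) i| ≤ lam)
    (hcomp : ∀ b : ι → ℝ, ∑ i ∈ Sᶜ, |b i| ≤ η * ∑ i ∈ S, |b i| →
      ν ^ 2 * (∑ i ∈ S, |b i|) ^ 2 ≤ #S * (b ⬝ᵥ W *ᵥ b))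
    (hopt : lassoObjective W e (A * lam) (β + Δ) ≤ lassoObjective W e (A * lam) β) :
    l1 Δ ≤ 8 * A ^ 2 * ν⁻¹ ^ 2 / (A - 1) * #S * lam := by
  have hsymm : W.IsSymm := isHermitian_iff_isSymm.mp hW.isHermitian
  rw [l1_eq_sum_add_sum_compl Δ S]
  exact add_le_of_half_le_of_compat hA hAη hlam hν (Nat.cast_nonneg _)
    (sum_nonneg fun _ _ => abs_nonneg _) (sum_nonneg fun _ _ => abs_nonneg _)
    (hW.dotProduct_mulVec_nonneg Δ)
    (half_quadForm_le_of_lassoObjective_le hsymm hβ hlam.le (by linarith) hres hopt) (hcomp Δ)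

lemma le_of_forall_sum_le_sum {κ V : Type*} [Fintype κ] [DecidableEq κ] (f : κ → V → ℝ)
    {x : κ → V} (hx : ∀ y : κ → V, ∑ k, f k (x k) ≤ ∑ k, f k (y k)) (j : κ) (v : V) :
    f j (x j) ≤ f j v := by
  have h := hx (Function.update x j v)
  simp only [Function.apply_update f x j v] at h
  rw [sum_update_of_mem (mem_univ j), sdiff_singleton_eq_erase,
    ← add_sum_erase univ (fun k => f k (x k)) (mem_univ j)] at h
  linarith

lemma matrixObjective_eq_sum_lassoObjective [DecidableEq ι] (W G : Matrix ι ι ℝ) (c : ℝ) :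
    1 / 2 * trace (Gᵀ * W * G) - trace G + c * matE1 G
      = ∑ k, lassoObjective W (Pi.single k 1) c (Gᵀ k) := by
  have hquad : ∀ k, (Gᵀ * W * G) k k = Gᵀ k ⬝ᵥ W *ᵥ Gᵀ k := fun k => by
    rw [mul_apply', mul_apply_eq_vecMul, dotProduct_mulVec]; rfl
  have hdiag : ∀ k, G k k = Pi.single k 1 ⬝ᵥ Gᵀ k := fun k => by
    rw [single_one_dotProduct]; rfl
  have hE1 : matE1 G = ∑ k, l1 (Gᵀ k) := sum_comm
  simp only [trace, Matrix.diag, hquad, hdiag, hE1, lassoObjective, mul_sum, sum_sub_distrib,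
    sum_add_distrib]

end Lasso

lemma abs_le_matMax {ι κ : Type*} [Fintype ι] [Fintype κ] (M : Matrix ι κ ℝ) (i : ι) (j : κ) :
    |M i j| ≤ matMax M :=
  (le_ciSup (Set.finite_range _).bddAbove j).trans
    (le_ciSup (f := fun i => ⨆ j, |M i j|) (Set.finite_range _).bddAbove i)

/-- Lemma S2 of Liang–Tan: deterministic column-wise ℓ¹ error bound
for the first-stage penalized estimator.  Under the compatibility condition for each
column support `S j`, the bound `‖WΓ* - I‖_max ≤ λ̄`, and `Ā₀ ≥ (η₀+1)/(η₀-1)`, any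
minimizer `Γhat` of `(1/2)Tr(GᵀWG) - Tr(G) + Ā₀ λ̄ ‖G‖_{L1}` satisfies
`‖Γhat_{·j} - Γ*_{·j}‖₁ ≤ (8Ā₀² ν₀⁻² / (Ā₀-1)) |S j| λ̄` for every `j`. -/
theorem stmt11 {p : ℕ} (W Γstar : Matrix (Fin p) (Fin p) ℝ) (lamBar ν0 η0 A0 : ℝ)
    (hW : W.PosSemidef) (hlam : 0 < lamBar) (hν0 : 0 < ν0) (hη0 : 1 < η0)
    (hcomp : ∀ j : Fin p, ∀ b : Fin p → ℝ,
      (∑ l ∈ Finset.univ.filter (fun l => Γstar l j = 0), |b l|)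
          ≤ η0 * ∑ l ∈ Finset.univ.filter (fun l => Γstar l j ≠ 0), |b l| →
        ν0 ^ 2 * (∑ l ∈ Finset.univ.filter (fun l => Γstar l j ≠ 0), |b l|) ^ 2
          ≤ (nnz (fun l => Γstar l j) : ℝ) * dot b (W.mulVec b))
    (hinf : matMax (W * Γstar - 1) ≤ lamBar)
    (hA0 : (η0 + 1) / (η0 - 1) ≤ A0)
    (Γhat : Matrix (Fin p) (Fin p) ℝ)
    (hmin : ∀ G : Matrix (Fin p) (Fin p) ℝ,
      (1 / 2) * Matrix.trace (Γhat.transpose * W * Γhat) - Matrix.trace Γhat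
          + A0 * lamBar * matE1 Γhat
        ≤ (1 / 2) * Matrix.trace (G.transpose * W * G) - Matrix.trace G
          + A0 * lamBar * matE1 G) :
    ∀ j, l1 (fun i => Γhat i j - Γstar i j)
      ≤ (8 * A0 ^ 2 * ν0⁻¹ ^ 2 / (A0 - 1)) * (nnz (fun l => Γstar l j) : ℝ) * lamBar := by
  intro j
  have hA1 : 1 < A0 := by
    have : 1 < (η0 + 1) / (η0 - 1) := by rw [one_lt_div (by linarith)]; linarith
    linarith
  have hAη : A0 + 1 ≤ η0 * (A0 - 1) := by
    have := (div_le_iff₀ (by linarith : (0 : ℝ) < η0 - 1)).mp hA0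
    linarith
  set S : Finset (Fin p) := {l | Γstar l j ≠ 0}
  have hSc : ({l | Γstar l j = 0} : Finset (Fin p)) = Sᶜ := by ext; simp [S]
  have hopt := le_of_forall_sum_le_sum (fun k => lassoObjective W (Pi.single k 1) (A0 * lamBar))
    (x := Γhatᵀ) (fun y => by
      have := hmin yᵀ
      rwa [matrixObjective_eq_sum_lassoObjective, matrixObjective_eq_sum_lassoObjective] at this)
    j (Γstarᵀ j)
  have hres : ∀ i, |(W *ᵥ Γstarᵀ j - Pi.single j 1 : Fin p → ℝ) i| ≤ lamBar := fun i => by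
    have hentry : (W * Γstar - 1) i j = (W *ᵥ Γstarᵀ j - Pi.single j 1 : Fin p → ℝ) i := by
      rw [Matrix.sub_apply, one_apply, Pi.sub_apply, Pi.single_apply]
      rfl
    exact hentry ▸ (abs_le_matMax _ i j).trans hinf
  rw [nnz_eq_card_filter_ne_zero]
  refine l1_le_of_lassoObjective_le hW (Δ := Γhatᵀ j - Γstarᵀ j) (S := S)
    (fun i hi => by simpa [S] using hi) hlam hν0 hA1 hAη hres (fun b => ?_)
    (by rwa [add_sub_cancel])
  rw [← hSc, ← nnz_eq_card_filter_ne_zero]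
  exact hcomp j b
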